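/- Let N ≥ 3, let f_1,...,f_N be commuting indeterminates with indices taken modulo N (f_0 = f_N), let β_0 = 0 and β_1,...,β_{N−1} be real constants, and let λ be a further parameter. Then for arbitrary real numbers v_1,...,v_N (indices mod N), the trace P(λ) = tr (V_N(λ + β_{N−1}) ⋯ V_2(λ + β_1) V_1(λ)) equals the Veselov–Shabat expression ∏_{n=0}^{N−1} (1 + (λ + β_n) ∂²/∂f_n ∂f_{n+1}) applied to the monomial f_1 f_2 ⋯ f_N, evaluated at f_n = v_n + v_{n+1}. -/

import Mathlib

open Polynomial in
/-- The matrix V_n(λ + b) with polynomial entries: rows (v_n, 1), (λ + b + v_n², v_n). -/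
noncomputable def polyV (w b : ℝ) : Matrix (Fin 2) (Fin 2) (Polynomial ℝ) :=
  !![C w, 1; X + C b + C (w ^ 2), C w]

/-- Partial transition matrix with polynomial entries:
`polyT v β k = V_k(λ+β_{k-1}) ⋯ V_2(λ+β_1) V_1(λ+β_0)`. -/
noncomputable def polyT (v β : ℕ → ℝ) : ℕ → Matrix (Fin 2) (Fin 2) (Polynomial ℝ)
  | 0 => 1
  | k + 1 => polyV (v (k + 1)) (β k) * polyT v β k

/-- The Veselov–Shabat operator 1 + (λ + β_n) ∂²/∂f_n ∂f_{n+1} on the polynomial ring in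
the variables f_i, i ∈ ℤ/N, over ℝ[λ]. -/
noncomputable def vsOpMod (N : ℕ) (β : ℕ → ℝ) (n : ℕ)
    (p : MvPolynomial (ZMod N) (Polynomial ℝ)) : MvPolynomial (ZMod N) (Polynomial ℝ) :=
  p + MvPolynomial.C (Polynomial.X + Polynomial.C (β n)) *
      MvPolynomial.pderiv ((n : ZMod N)) (MvPolynomial.pderiv ((n : ZMod N) + 1) p)

/-- The Veselov–Shabat expression
∏_{n=0}^{N−1} (1 + (λ + β_n) ∂²/∂f_n ∂f_{n+1}) (f_1 f_2 ⋯ f_N), indices mod N. -/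
noncomputable def vsTraceExpr (N : ℕ) (β : ℕ → ℝ) : MvPolynomial (ZMod N) (Polynomial ℝ) :=
  (List.range N).foldr (vsOpMod N β) (∏ n ∈ Finset.range N, MvPolynomial.X ((n : ZMod N)))

/-!
Writing `E(u) = [[1, 0], [u, 1]]`, one has `V_n(μ) E(u) = E(v_n) [[u + v_n, 1], [μ, 0]]`, so
`V_N ⋯ V_1` is conjugate, by `E(v_N) = E(v_0)`, to the product of the continuant matrices
`[[f_n, 1], [λ + β_n, 0]]` with `f_n = v_n + v_{n+1}`. Its trace is the cyclic continuant
`K(f_0, …, f_{N-1}) + (λ + β_{N-1}) K(f_1, …, f_{N-2})`.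

On the operator side, the factors `1 + (λ + β_n) ∂_n ∂_{n+1}` with `n < k` turn the path monomial
`f_0 ⋯ f_k` into `K(f_0, …, f_k)`: peeling off the last factor gives the continuant recurrence.
The wrap-around factor `n = N - 1` couples `f_{N-1}` with `f_0` and splits `f_0 ⋯ f_{N-1}` into
`f_0 ⋯ f_{N-1} + (λ + β_{N-1}) f_1 ⋯ f_{N-2}`, two open paths; `N ≥ 3` keeps the pair
`(N - 1, 0)` distinct from the pairs `(n, n + 1)` of the open path.
-/

namespace MvPolynomial

variable {σ R : Type*} [CommSemiring R]

theorem pderiv_pderiv_X (i j k : σ) : pderiv i (pderiv j (X k : MvPolynomial σ R)) = 0 := by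
  rcases eq_or_ne k j with rfl | h
  · rw [pderiv_X_self, pderiv_one]
  · rw [pderiv_X_of_ne h, map_zero]

theorem pderiv_pderiv_comm (i j : σ) (p : MvPolynomial σ R) :
    pderiv i (pderiv j p) = pderiv j (pderiv i p) := by
  induction p using MvPolynomial.induction_on with
  | C a => simp
  | add p q hp hq => simp only [map_add, hp, hq]
  | mul_X p k ih =>
    simp only [Derivation.leibniz, map_add, smul_eq_mul, pderiv_pderiv_X, ih]
    ring

end MvPolynomial

section Continuant

variable {R : Type*} [Semiring R]

-- `b n` weights the removal of the adjacent pair `a n, a (n + 1)`.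
def continuant (a b : ℕ → R) : ℕ → R
  | 0 => 1
  | 1 => a 0
  | k + 2 => a (k + 1) * continuant a b (k + 1) + b k * continuant a b k

def transferMatrix (x c : R) : Matrix (Fin 2) (Fin 2) R := !![x, 1; c, 0]

def transferProd (a b : ℕ → R) : ℕ → Matrix (Fin 2) (Fin 2) R
  | 0 => 1
  | k + 1 => transferMatrix (a k) (b k) * transferProd a b k

theorem transferProd_succ_eq_mul (a b : ℕ → R) (k : ℕ) :
    transferProd a b (k + 1) =
      transferProd (fun n => a (n + 1)) (fun n => b (n + 1)) k * transferMatrix (a 0) (b 0) := by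
  induction k with
  | zero => simp [transferProd]
  | succ k ih => rw [transferProd, ih, transferProd, Matrix.mul_assoc]

theorem transferProd_col_zero (a b : ℕ → R) (k : ℕ) :
    transferProd a b (k + 1) 0 0 = continuant a b (k + 1) ∧
      transferProd a b (k + 1) 1 0 = b k * continuant a b k := by
  induction k with
  | zero => simp [transferProd, transferMatrix, continuant]
  | succ k ih =>
    rw [transferProd, transferMatrix, Matrix.mul_apply, Matrix.mul_apply]
    simp [Fin.sum_univ_two, ih.1, ih.2, continuant]

theorem trace_transferProd (a b : ℕ → R) (k : ℕ) :
    (transferProd a b (k + 2)).trace =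
      continuant a b (k + 2) +
        b (k + 1) * continuant (fun n => a (n + 1)) (fun n => b (n + 1)) k := by
  rw [Matrix.trace_fin_two, (transferProd_col_zero a b (k + 1)).1, transferProd_succ_eq_mul,
    Matrix.mul_apply, Fin.sum_univ_two]
  simp [transferMatrix, (transferProd_col_zero _ _ k).2]

theorem RingHom.mapMatrix_transferProd {S : Type*} [Semiring S] (f : R →+* S) (a b : ℕ → R)
    (k : ℕ) :
    f.mapMatrix (transferProd a b k) = transferProd (f ∘ a) (f ∘ b) k := by
  induction k with
  | zero => simp [transferProd]
  | succ k ih =>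
    rw [transferProd, map_mul, ih, transferProd]
    congr 1
    ext i j; fin_cases i <;> fin_cases j <;> simp [transferMatrix]

end Continuant

section PolyT

open Polynomial Matrix

theorem polyV_mul_transvection (w b u : ℝ) :
    polyV w b * transvection 1 0 (C u) =
      transvection 1 0 (C w) * transferMatrix (C (u + w)) (X + C b) := by
  ext i j : 1
  fin_cases i <;> fin_cases j <;>
    simp [polyV, transferMatrix, transvection, mul_apply, Fin.sum_univ_two] <;> ring

theorem polyT_eq_transvection_mul_transferProd_mul (v β : ℕ → ℝ) (k : ℕ) :
    polyT v β k = transvection 1 0 (C (v k)) *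
      transferProd (fun n => C (v n + v (n + 1))) (fun n => X + C (β n)) k *
      transvection 1 0 (-C (v 0)) := by
  induction k with
  | zero => simp [polyT, transferProd, transvection_mul_transvection_same]
  | succ k ih =>
    rw [polyT, ih, ← mul_assoc, ← mul_assoc, polyV_mul_transvection, transferProd,
      mul_assoc _ (transferMatrix _ _)]

theorem trace_polyT (v β : ℕ → ℝ) {k : ℕ} (hv : v k = v 0) :
    (polyT v β k).trace =
      (transferProd (fun n => C (v n + v (n + 1))) (fun n => X + C (β n)) k).trace := by
  rw [polyT_eq_transvection_mul_transferProd_mul, trace_mul_cycle, hv,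
    transvection_mul_transvection_same 1 0 (by decide), neg_add_cancel, transvection_zero, one_mul]

end PolyT

theorem Derivation.map_prod_eq_zero {R A M : Type*} [CommSemiring R] [CommSemiring A]
    [Algebra R A] [AddCommMonoid M] [Module A M] [Module R M] (D : Derivation R A M)
    {ι : Type*} (s : Finset ι) (f : ι → A) (h : ∀ i ∈ s, D (f i) = 0) :
    D (∏ i ∈ s, f i) = 0 :=
  Finset.prod_induction f (fun a => D a = 0)
    (fun a b ha hb => by rw [D.leibniz, ha, hb, smul_zero, smul_zero, add_zero])
    D.map_one_eq_zero h

section VeselovShabatOperator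

open MvPolynomial
open scoped Polynomial

variable {N : ℕ} (β : ℕ → ℝ)

theorem pderiv_natCast_X_natCast {R : Type*} [CommSemiring R] {m n : ℕ} (hm : m < N) (hn : n < N)
    (h : m ≠ n) : pderiv (m : ZMod N) (X (n : ZMod N) : MvPolynomial (ZMod N) R) = 0 :=
  pderiv_X_of_ne ((CharP.natCast_injOn_Iio (ZMod N) N).ne hn hm h.symm)

theorem pderiv_prod_X_eq_zero {R : Type*} [CommSemiring R] {i k m : ℕ} (hm : m < N)
    (hk : k + i ≤ N) (him : m < i ∨ k + i ≤ m) :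
    pderiv (m : ZMod N)
      (∏ n ∈ Finset.range k, (X ((n + i : ℕ) : ZMod N) : MvPolynomial (ZMod N) R)) = 0 :=
  Derivation.map_prod_eq_zero _ _ _ fun n hn =>
    pderiv_natCast_X_natCast hm (by simp at hn; omega) (by simp at hn; omega)

theorem pderiv_vsOpMod (j : ZMod N) (n : ℕ) (p : MvPolynomial (ZMod N) ℝ[X]) :
    pderiv j (vsOpMod N β n p) = vsOpMod N β n (pderiv j p) := by
  rw [vsOpMod, vsOpMod, map_add, pderiv_C_mul, pderiv_pderiv_comm j, pderiv_pderiv_comm j]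

theorem vsOpMod_eq_self_of_pderiv_succ_eq_zero {n : ℕ} {p : MvPolynomial (ZMod N) ℝ[X]}
    (h : pderiv ((n : ZMod N) + 1) p = 0) : vsOpMod N β n p = p := by
  rw [vsOpMod, h, map_zero, mul_zero, add_zero]

theorem vsOpMod_eq_self_of_pderiv_eq_zero {n : ℕ} {p : MvPolynomial (ZMod N) ℝ[X]}
    (h : pderiv (n : ZMod N) p = 0) : vsOpMod N β n p = p := by
  rw [vsOpMod, pderiv_pderiv_comm, h, map_zero, mul_zero, add_zero]

theorem vsOpMod_mul_of_pderiv_eq_zero {n : ℕ} {q : MvPolynomial (ZMod N) ℝ[X]}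
    (h₀ : pderiv (n : ZMod N) q = 0) (h₁ : pderiv ((n : ZMod N) + 1) q = 0)
    (p : MvPolynomial (ZMod N) ℝ[X]) : vsOpMod N β n (p * q) = vsOpMod N β n p * q := by
  simp only [vsOpMod, pderiv_mul, h₀, h₁, mul_zero, add_zero]
  ring

theorem vsOpMod_mul_X_mul_X [Nontrivial (ZMod N)] {n : ℕ} {q : MvPolynomial (ZMod N) ℝ[X]}
    (h₀ : pderiv (n : ZMod N) q = 0) (h₁ : pderiv ((n : ZMod N) + 1) q = 0) :
    vsOpMod N β n (q * X (n : ZMod N) * X ((n : ZMod N) + 1)) =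
      q * X (n : ZMod N) * X ((n : ZMod N) + 1) + C (Polynomial.X + Polynomial.C (β n)) * q := by
  have hne : (n : ZMod N) ≠ n + 1 := (add_ne_left.mpr one_ne_zero).symm
  simp only [vsOpMod, pderiv_mul, h₀, h₁, pderiv_X_self, pderiv_X_of_ne hne, mul_zero, zero_mul,
    add_zero, zero_add, mul_one]

theorem pderiv_foldr_vsOpMod (l : List ℕ) (j : ZMod N) (p : MvPolynomial (ZMod N) ℝ[X]) :
    pderiv j (l.foldr (vsOpMod N β) p) = l.foldr (vsOpMod N β) (pderiv j p) := by
  induction l with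
  | nil => rfl
  | cons n l ih => rw [List.foldr_cons, List.foldr_cons, pderiv_vsOpMod, ih]

theorem foldr_vsOpMod_add (l : List ℕ) (p q : MvPolynomial (ZMod N) ℝ[X]) :
    l.foldr (vsOpMod N β) (p + q) = l.foldr (vsOpMod N β) p + l.foldr (vsOpMod N β) q := by
  induction l with
  | nil => rfl
  | cons n l ih =>
    simp only [List.foldr_cons, ih, vsOpMod, map_add, mul_add]
    ring

theorem foldr_vsOpMod_C_mul (l : List ℕ) (c : ℝ[X]) (p : MvPolynomial (ZMod N) ℝ[X]) :
    l.foldr (vsOpMod N β) (C c * p) = C c * l.foldr (vsOpMod N β) p := by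
  induction l with
  | nil => rfl
  | cons n l ih =>
    simp only [List.foldr_cons, ih, vsOpMod, pderiv_C_mul]
    ring

theorem foldr_vsOpMod_mul_of_pderiv_eq_zero (l : List ℕ) {q : MvPolynomial (ZMod N) ℝ[X]}
    (h₀ : ∀ n ∈ l, pderiv (n : ZMod N) q = 0)
    (h₁ : ∀ n ∈ l, pderiv ((n : ZMod N) + 1) q = 0) (p : MvPolynomial (ZMod N) ℝ[X]) :
    l.foldr (vsOpMod N β) (p * q) = l.foldr (vsOpMod N β) p * q := by
  induction l with
  | nil => rfl
  | cons n l ih =>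
    rw [List.foldr_cons, List.foldr_cons,
      ih (fun m hm => h₀ m (List.mem_cons_of_mem n hm))
        (fun m hm => h₁ m (List.mem_cons_of_mem n hm)),
      vsOpMod_mul_of_pderiv_eq_zero β (h₀ n List.mem_cons_self) (h₁ n List.mem_cons_self)]

theorem foldr_vsOpMod_range'_succ_prod_X {i k : ℕ} (h : k + 1 + i < N) :
    (List.range' i (k + 1)).foldr (vsOpMod N β)
        (∏ n ∈ Finset.range (k + 1), X ((n + i : ℕ) : ZMod N)) =
      (List.range' i k).foldr (vsOpMod N β)
        (∏ n ∈ Finset.range (k + 1), X ((n + i : ℕ) : ZMod N)) := by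
  rw [List.range'_concat, List.foldr_append, List.foldr_cons, List.foldr_nil, one_mul,
    vsOpMod_eq_self_of_pderiv_succ_eq_zero]
  rw [← Nat.cast_succ]
  exact pderiv_prod_X_eq_zero (by omega) (by omega) (by omega)

theorem foldr_vsOpMod_range'_prod_X {i : ℕ} : ∀ {k : ℕ}, k + i < N →
    (List.range' i k).foldr (vsOpMod N β)
        (∏ n ∈ Finset.range (k + 1), X ((n + i : ℕ) : ZMod N)) =
      continuant (fun n => X ((n + i : ℕ) : ZMod N))
        (fun n => C (Polynomial.X + Polynomial.C (β (n + i)))) (k + 1)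
  | 0, _ => by simp [continuant]
  | k + 1, h => by
    have : Nontrivial (ZMod N) := ZMod.nontrivial_iff.mpr (by omega)
    have hsucc : ((k + 1 + i : ℕ) : ZMod N) = ((k + i : ℕ) : ZMod N) + 1 := by push_cast; ring
    have hprod : ∏ n ∈ Finset.range (k + 2),
        (X ((n + i : ℕ) : ZMod N) : MvPolynomial (ZMod N) ℝ[X]) =
        (∏ n ∈ Finset.range k, X ((n + i : ℕ) : ZMod N)) * X ((k + i : ℕ) : ZMod N) *
          X (((k + i : ℕ) : ZMod N) + 1) := by
      rw [Finset.prod_range_succ, Finset.prod_range_succ, hsucc]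
    have hshort : (List.range' i k).foldr (vsOpMod N β)
          (∏ n ∈ Finset.range k, X ((n + i : ℕ) : ZMod N)) =
        continuant (fun n => X ((n + i : ℕ) : ZMod N))
          (fun n => C (Polynomial.X + Polynomial.C (β (n + i)))) k := by
      cases k with
      | zero => rfl
      | succ k =>
        rw [foldr_vsOpMod_range'_succ_prod_X β (by omega), foldr_vsOpMod_range'_prod_X (by omega)]
    have h₀ : ∀ m ∈ List.range' i k, pderiv (m : ZMod N)
        (X (((k + i : ℕ) : ZMod N) + 1) : MvPolynomial (ZMod N) ℝ[X]) = 0 := fun m hm => by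
      rw [List.mem_range'_1] at hm
      rw [← hsucc]
      exact pderiv_natCast_X_natCast (by omega) h (by omega)
    have h₁ : ∀ m ∈ List.range' i k, pderiv ((m : ZMod N) + 1)
        (X (((k + i : ℕ) : ZMod N) + 1) : MvPolynomial (ZMod N) ℝ[X]) = 0 := fun m hm => by
      rw [List.mem_range'_1] at hm
      rw [← hsucc, ← Nat.cast_succ]
      exact pderiv_natCast_X_natCast (by omega) h (by omega)
    rw [List.range'_concat, List.foldr_append, List.foldr_cons, List.foldr_nil, one_mul, add_comm i,
      hprod, vsOpMod_mul_X_mul_X β (pderiv_prod_X_eq_zero (by omega) (by omega) (by omega))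
        (by rw [← Nat.cast_succ]; exact pderiv_prod_X_eq_zero (by omega) (by omega) (by omega)),
      foldr_vsOpMod_add, foldr_vsOpMod_C_mul, foldr_vsOpMod_mul_of_pderiv_eq_zero β _ h₀ h₁,
      ← Finset.prod_range_succ, foldr_vsOpMod_range'_prod_X (by omega), hshort, continuant, hsucc,
      mul_comm]

theorem foldr_vsOpMod_zero (l : List ℕ) : l.foldr (vsOpMod N β) 0 = 0 := by
  simpa using foldr_vsOpMod_C_mul β l 0 0

theorem vsTraceExpr_eq_trace_transferProd (hN : 3 ≤ N) :
    vsTraceExpr N β = (transferProd (fun n => X (n : ZMod N))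
      (fun n => C (Polynomial.X + Polynomial.C (β n))) N).trace := by
  obtain ⟨M, rfl⟩ : ∃ M, N = M + 1 + 2 := ⟨N - 3, by omega⟩
  have : Nontrivial (ZMod (M + 1 + 2)) := ZMod.nontrivial_iff.mpr (by omega)
  have hwrap : ((M + 2 : ℕ) : ZMod (M + 1 + 2)) + 1 = ((0 : ℕ) : ZMod (M + 1 + 2)) := by
    rw [← Nat.cast_succ, Nat.cast_zero]
    exact ZMod.natCast_self _
  set Y : MvPolynomial (ZMod (M + 1 + 2)) ℝ[X] :=
    ∏ n ∈ Finset.range (M + 1), X ((n + 1 : ℕ) : ZMod (M + 1 + 2))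
  have hprod : ∏ n ∈ Finset.range (M + 1 + 2), (X (n : ZMod (M + 1 + 2)) :
      MvPolynomial (ZMod (M + 1 + 2)) ℝ[X]) =
      Y * X ((M + 2 : ℕ) : ZMod (M + 1 + 2)) * X (((M + 2 : ℕ) : ZMod (M + 1 + 2)) + 1) := by
    rw [Finset.prod_range_succ, Finset.prod_range_succ', hwrap, mul_right_comm]
  have hY₀ : pderiv ((0 : ℕ) : ZMod (M + 1 + 2)) Y = 0 :=
    pderiv_prod_X_eq_zero (by omega) (by omega) (by omega)
  have hshifted : (List.range' 0 (M + 2)).foldr (vsOpMod _ β) Y =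
      continuant (fun n => X ((n + 1 : ℕ) : ZMod (M + 1 + 2)))
        (fun n => C (Polynomial.X + Polynomial.C (β (n + 1)))) (M + 1) := by
    rw [List.range'_succ, List.foldr_cons, vsOpMod_eq_self_of_pderiv_eq_zero β
        (by rw [pderiv_foldr_vsOpMod, hY₀, foldr_vsOpMod_zero]), zero_add,
      foldr_vsOpMod_range'_succ_prod_X β (by omega), foldr_vsOpMod_range'_prod_X β (by omega)]
  rw [vsTraceExpr, List.range_eq_range', List.range'_concat, List.foldr_append, List.foldr_cons,
    List.foldr_nil, zero_add, one_mul, hprod,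
    vsOpMod_mul_X_mul_X β (pderiv_prod_X_eq_zero (by omega) (by omega) (by omega))
      (by rw [hwrap]; exact hY₀), ← hprod, foldr_vsOpMod_add, foldr_vsOpMod_C_mul, hshifted,
    trace_transferProd]
  have hpath := foldr_vsOpMod_range'_prod_X β (N := M + 1 + 2) (i := 0) (k := M + 2) (by omega)
  simp only [add_zero] at hpath
  rw [hpath]

end VeselovShabatOperator

theorem veselov_shabat_trace_formula_general (N : ℕ) (hN : 3 ≤ N) (β : ℕ → ℝ)
    (v : ZMod N → ℝ) :
    Matrix.trace (polyT (fun n => v ((n : ZMod N))) β N)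
      = MvPolynomial.eval (fun i : ZMod N => Polynomial.C (v i + v (i + 1)))
          (vsTraceExpr N β) := by
  rw [trace_polyT _ β (by simp), vsTraceExpr_eq_trace_transferProd β hN, AddMonoidHom.map_trace,
    ← RingHom.mapMatrix_apply, RingHom.mapMatrix_transferProd]
  congr <;> funext n <;> simp

/-- the Veselov–Shabat trace formula: P(λ) = tr(V_N(λ+β_{N−1}) ⋯ V_1(λ))
equals ∏_{n=0}^{N−1}(1 + (λ+β_n) ∂²/∂f_n ∂f_{n+1})(f_1 ⋯ f_N) evaluated at
f_n = v_n + v_{n+1}. -/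
theorem veselov_shabat_trace_formula (N : ℕ) (hN : 3 ≤ N) (β : ℕ → ℝ) (hβ0 : β 0 = 0)
    (v : ZMod N → ℝ) :
    Matrix.trace (polyT (fun n => v ((n : ZMod N))) β N)
      = MvPolynomial.eval (fun i : ZMod N => Polynomial.C (v i + v (i + 1)))
          (vsTraceExpr N β) :=
  veselov_shabat_trace_formula_general N hN β v
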